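/- arXiv:1802.04741 — 2 statements merged into one kernel-verified Lean document; each statement's English description precedes it below -/
import Mathlib

section
/- Theorem 1, Part 2 (BER invariance): In the setting of the syndrome-based decoder, let H be an r × N matrix over ZMod 2, F : (Fin N → ℝ) × (Fin r → ZMod 2) → (Fin N → ℝ), and D(y) := sign(y) * F(|y|, H · bin(sign(y))) for vectors y with nonzero components. Let x^b satisfy H · x^b = 0, x = bipolar(x^b), and let z : Fin N → ℝ have nonzero components; assume moreover F(|z|, H · bin(sign(z)))_i ≠ 0 for every i. Then the set of bit-error indices { i : sign(D(x * z)_i) ≠ x_i } equals { i : sign(D(z)_i) ≠ 1 }, and in particular does not depend on the transmitted codeword x. -/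
/-!
Multiplying a received word by `x = bipolar(x^b)` flips its hard decisions exactly on the
support of `x^b`, so it adds the codeword `x^b` to `bin (sign y)` and leaves the syndrome
unchanged; it leaves `|y|` unchanged as well. Hence `D(x * z) = x * D(z)`, and comparing the
sign of `D(x * z)` with `x` is the same as comparing the sign of `D(z)` with `1`.
-/

/-- The bipolar map: `0 ↦ 1`, `1 ↦ −1`. -/
noncomputable def bipolar (b : ZMod 2) : ℝ := if b = 0 then 1 else -1

/-- Sign of a real number: `1` if positive, `−1` otherwise (only used on
nonzero reals). -/
noncomputable def sgn (t : ℝ) : ℝ := if 0 < t then 1 else -1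

/-- The inverse of the bipolar map: `bin 1 = 0`, `bin (-1) = 1`. -/
noncomputable def bin (t : ℝ) : ZMod 2 := if t = 1 then 0 else 1

lemma bipolar_eq_one_or_eq_neg_one (b : ZMod 2) : bipolar b = 1 ∨ bipolar b = -1 := by
  unfold bipolar
  split_ifs <;> simp

lemma bipolar_ne_zero (b : ZMod 2) : bipolar b ≠ 0 := by
  rcases bipolar_eq_one_or_eq_neg_one b with h | h <;> norm_num [h]

lemma abs_bipolar (b : ZMod 2) : |bipolar b| = 1 := by
  rcases bipolar_eq_one_or_eq_neg_one b with h | h <;> norm_num [h]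

lemma sgn_eq_one_or_eq_neg_one (t : ℝ) : sgn t = 1 ∨ sgn t = -1 := by
  unfold sgn
  split_ifs <;> simp

lemma sgn_ne_zero (t : ℝ) : sgn t ≠ 0 := by
  rcases sgn_eq_one_or_eq_neg_one t with h | h <;> norm_num [h]

lemma sgn_of_pos {t : ℝ} (h : 0 < t) : sgn t = 1 := if_pos h

lemma sgn_of_neg {t : ℝ} (h : t < 0) : sgn t = -1 := if_neg h.not_gt

lemma sgn_bipolar_mul (b : ZMod 2) {t : ℝ} (ht : t ≠ 0) :
    sgn (bipolar b * t) = bipolar b * sgn t := by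
  rcases bipolar_eq_one_or_eq_neg_one b with hb | hb <;> rw [hb]
  · simp
  · rcases ht.lt_or_gt with h | h
    · rw [sgn_of_neg h, sgn_of_pos (by linarith)]; norm_num
    · rw [sgn_of_pos h, sgn_of_neg (by linarith)]; norm_num

lemma bin_bipolar_mul (b : ZMod 2) {s : ℝ} (hs : s = 1 ∨ s = -1) :
    bin (bipolar b * s) = b + bin s := by
  obtain rfl | rfl : b = 0 ∨ b = 1 := by revert b; decide
  all_goals rcases hs with rfl | rfl <;> norm_num [bipolar, bin]
  decide

lemma bin_sgn_bipolar_mul (b : ZMod 2) {t : ℝ} (ht : t ≠ 0) :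
    bin (sgn (bipolar b * t)) = b + bin (sgn t) := by
  rw [sgn_bipolar_mul b ht, bin_bipolar_mul b (sgn_eq_one_or_eq_neg_one t)]

section SyndromeDecoder

open Matrix

variable {m n : Type*} [Fintype n]

noncomputable def syndromeDecoder (H : Matrix m n (ZMod 2))
    (F : (n → ℝ) → (m → ZMod 2) → (n → ℝ)) (y : n → ℝ) : n → ℝ :=
  fun i => sgn (y i) * F (fun j => |y j|) (H *ᵥ fun j => bin (sgn (y j))) i

lemma mulVec_bin_sgn_bipolar_mul {H : Matrix m n (ZMod 2)} {xb : n → ZMod 2}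
    (hxb : H *ᵥ xb = 0) {z : n → ℝ} (hz : ∀ i, z i ≠ 0) :
    (H *ᵥ fun j => bin (sgn (bipolar (xb j) * z j))) = H *ᵥ fun j => bin (sgn (z j)) := by
  have hsplit : (fun j => bin (sgn (bipolar (xb j) * z j))) = xb + fun j => bin (sgn (z j)) :=
    funext fun j => bin_sgn_bipolar_mul (xb j) (hz j)
  rw [hsplit, mulVec_add, hxb, zero_add]

lemma syndromeDecoder_bipolar_mul (H : Matrix m n (ZMod 2))
    (F : (n → ℝ) → (m → ZMod 2) → (n → ℝ)) {xb : n → ZMod 2} (hxb : H *ᵥ xb = 0)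
    {z : n → ℝ} (hz : ∀ i, z i ≠ 0) (i : n) :
    syndromeDecoder H F (fun j => bipolar (xb j) * z j) i =
      bipolar (xb i) * syndromeDecoder H F z i := by
  have habs : (fun j => |bipolar (xb j) * z j|) = fun j => |z j| := by
    simp only [abs_mul, abs_bipolar, one_mul]
  simp only [syndromeDecoder, habs, mulVec_bin_sgn_bipolar_mul hxb hz,
    sgn_bipolar_mul (xb i) (hz i), mul_assoc]

end SyndromeDecoder

lemma sgn_bipolar_mul_ne_bipolar_iff (b : ZMod 2) {u : ℝ} (hu : u ≠ 0) :
    sgn (bipolar b * u) ≠ bipolar b ↔ sgn u ≠ 1 := by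
  rw [sgn_bipolar_mul b hu, Ne, mul_eq_left₀ (bipolar_ne_zero b)]

/-- Theorem 1, Part 2 (BER invariance): for the syndrome-based decoder
`D(y) = sign(y) * F(|y|, H · bin(sign(y)))`, the set of bit-error indices
`{i : sign(D(x*z)_i) ≠ x_i}` equals `{i : sign(D(z)_i) ≠ 1}` and hence does
not depend on the transmitted codeword `x`. -/
theorem ber_invariant_to_codeword (r N : ℕ)
    (H : Matrix (Fin r) (Fin N) (ZMod 2))
    (F : (Fin N → ℝ) → (Fin r → ZMod 2) → (Fin N → ℝ))
    (D : (Fin N → ℝ) → (Fin N → ℝ))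
    (hD : ∀ y, D y = fun i =>
      sgn (y i) * F (fun j => |y j|) (H.mulVec (fun j => bin (sgn (y j)))) i)
    (xb : Fin N → ZMod 2) (hxb : H.mulVec xb = 0)
    (z : Fin N → ℝ) (hz : ∀ i, z i ≠ 0)
    (hF : ∀ i, F (fun j => |z j|) (H.mulVec (fun j => bin (sgn (z j)))) i ≠ 0) :
    {i | sgn (D (fun j => bipolar (xb j) * z j) i) ≠ bipolar (xb i)} =
      {i | sgn (D z i) ≠ 1} := by
  obtain rfl : D = syndromeDecoder H F := funext hD
  ext i
  have hDz : syndromeDecoder H F z i ≠ 0 := mul_ne_zero (sgn_ne_zero (z i)) (hF i)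
  rw [Set.mem_ofPred_eq, Set.mem_ofPred_eq, syndromeDecoder_bipolar_mul H F hxb hz i]
  exact sgn_bipolar_mul_ne_bipolar_iff (xb i) hDz
end

section
/- Sufficiency of (|y|, H y^b, A y^b) as a description of y: Let G, H, A be as in Lemma 1 (G an N × K matrix over ZMod 2 with injective associated map, H an r × N matrix over ZMod 2 with rank(H) = N − K and H·G = 0, A a K × N matrix with A·G = I_K). If y, y' : Fin N → ℝ have all components nonzero and satisfy |y| = |y'|, H · bin(sign(y)) = H · bin(sign(y')), and A · bin(sign(y)) = A · bin(sign(y')), then y = y'. (The channel output is determined by its reliabilities together with the syndrome and message-space projection of its hard decisions.) -/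
theorem sgn_mul_abs (t : ℝ) : sgn t * |t| = t := by
  unfold sgn
  split_ifs with ht
  · rw [one_mul, abs_of_pos ht]
  · rw [abs_of_nonpos (not_lt.mp ht), neg_one_mul, neg_neg]

theorem bin_sgn (t : ℝ) : bin (sgn t) = if 0 < t then 0 else 1 := by
  unfold bin sgn
  split_ifs <;> norm_num at *

theorem eq_of_abs_eq_of_bin_sgn_eq {s t : ℝ} (habs : |s| = |t|)
    (hbin : bin (sgn s) = bin (sgn t)) : s = t := by
  have hsgn : sgn s = sgn t := by
    rw [bin_sgn, bin_sgn] at hbin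
    unfold sgn
    split_ifs at hbin ⊢ <;> first | rfl | exact absurd hbin (by decide)
  rw [← sgn_mul_abs s, ← sgn_mul_abs t, hsgn, habs]

namespace Matrix

variable {F : Type*} [Field F] {m n k : Type*} [Fintype n] [Fintype k]
  [DecidableEq k] {H : Matrix m n F} {G : Matrix n k F} {A : Matrix k n F}

theorem mulVec_leftInverse_of_mul_eq_one (hAG : A * G = 1) :
    Function.LeftInverse A.mulVec G.mulVec := fun x => by
  rw [mulVec_mulVec, hAG, one_mulVec]

theorem card_le_card_of_mul_eq_one (hAG : A * G = 1) : Fintype.card k ≤ Fintype.card n :=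
  calc Fintype.card k = (A * G).rank := by rw [hAG, rank_one]
    _ ≤ A.rank := rank_mul_le_left A G
    _ ≤ Fintype.card n := rank_le_card_width A

theorem range_mulVecLin_eq_ker_mulVecLin (hHG : H * G = 0) (hAG : A * G = 1)
    (hrank : H.rank = Fintype.card n - Fintype.card k) :
    LinearMap.range G.mulVecLin = LinearMap.ker H.mulVecLin := by
  have hle : LinearMap.range G.mulVecLin ≤ LinearMap.ker H.mulVecLin := by
    rintro _ ⟨x, rfl⟩
    rw [LinearMap.mem_ker, mulVecLin_apply, mulVecLin_apply, mulVec_mulVec, hHG, zero_mulVec]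
  have hG : Function.Injective G.mulVecLin := (mulVec_leftInverse_of_mul_eq_one hAG).injective
  have hrange : Module.finrank F (LinearMap.range G.mulVecLin) = Fintype.card k := by
    rw [LinearMap.finrank_range_of_inj hG, Module.finrank_fintype_fun_eq_card]
  have hker : Module.finrank F (LinearMap.ker H.mulVecLin) = Fintype.card k := by
    have := LinearMap.finrank_range_add_finrank_ker H.mulVecLin
    rw [← rank, hrank, Module.finrank_fintype_fun_eq_card] at this
    have := card_le_card_of_mul_eq_one hAG
    omega
  exact Submodule.eq_of_le_of_finrank_le hle (hker.trans hrange.symm).le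

theorem eq_zero_of_mulVec_eq_zero_of_mulVec_eq_zero (hHG : H * G = 0) (hAG : A * G = 1)
    (hrank : H.rank = Fintype.card n - Fintype.card k) {d : n → F}
    (hHd : H *ᵥ d = 0) (hAd : A *ᵥ d = 0) : d = 0 := by
  have hd : d ∈ LinearMap.range G.mulVecLin := by
    rw [range_mulVecLin_eq_ker_mulVecLin hHG hAG hrank]
    exact hHd
  obtain ⟨x, rfl⟩ := hd
  have hx : x = 0 := (mulVec_leftInverse_of_mul_eq_one hAG x).symm.trans hAd
  rw [hx, map_zero]

end Matrix

theorem channel_output_determined_by_reliabilities_syndrome_projection_general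
    (N K r : ℕ)
    (G : Matrix (Fin N) (Fin K) (ZMod 2))
    (H : Matrix (Fin r) (Fin N) (ZMod 2)) (hHrank : H.rank = N - K)
    (hHG : H * G = 0)
    (A : Matrix (Fin K) (Fin N) (ZMod 2)) (hAG : A * G = 1)
    (y y' : Fin N → ℝ)
    (habs : ∀ i, |y i| = |y' i|)
    (hsyn : H.mulVec (fun i => bin (sgn (y i))) =
      H.mulVec (fun i => bin (sgn (y' i))))
    (hproj : A.mulVec (fun i => bin (sgn (y i))) =
      A.mulVec (fun i => bin (sgn (y' i)))) :
    y = y' := by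
  have hbin : (fun i => bin (sgn (y i))) = fun i => bin (sgn (y' i)) := by
    rw [← sub_eq_zero]
    refine Matrix.eq_zero_of_mulVec_eq_zero_of_mulVec_eq_zero hHG hAG ?_ ?_ ?_
    · simpa only [Fintype.card_fin] using hHrank
    · rw [Matrix.mulVec_sub, hsyn, sub_self]
    · rw [Matrix.mulVec_sub, hproj, sub_self]
  funext i
  exact eq_of_abs_eq_of_bin_sgn_eq (habs i) (congrFun hbin i)

/-- Sufficiency of `(|y|, H y^b, A y^b)`: a channel output with nonzero
components is determined by its reliabilities together with the syndrome and
message-space projection of its hard decisions. -/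
theorem channel_output_determined_by_reliabilities_syndrome_projection
    (N K r : ℕ)
    (G : Matrix (Fin N) (Fin K) (ZMod 2)) (hG : Function.Injective G.mulVec)
    (H : Matrix (Fin r) (Fin N) (ZMod 2)) (hHrank : H.rank = N - K)
    (hHG : H * G = 0)
    (A : Matrix (Fin K) (Fin N) (ZMod 2)) (hAG : A * G = 1)
    (y y' : Fin N → ℝ) (hy : ∀ i, y i ≠ 0) (hy' : ∀ i, y' i ≠ 0)
    (habs : ∀ i, |y i| = |y' i|)
    (hsyn : H.mulVec (fun i => bin (sgn (y i))) =
      H.mulVec (fun i => bin (sgn (y' i))))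
    (hproj : A.mulVec (fun i => bin (sgn (y i))) =
      A.mulVec (fun i => bin (sgn (y' i)))) :
    y = y' :=
  channel_output_determined_by_reliabilities_syndrome_projection_general N K r G H hHrank hHG A hAG
    y y' habs hsyn hproj
end
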